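/- Composing the unigram and bigram components: with c^{(1)}_t = f^{(1)}_t·c^{(1)}_{t-1} + u^{(1)}_t, c^{(2)}_t = f^{(2)}_t·c^{(2)}_{t-1} + (c^{(1)}_{t-1} + r)·u^{(2)}_t (both starting at 0), and c_t = p^{(1)}·c^{(1)}_t + p^{(2)}·c^{(2)}_t where f^{(j)}_t, u^{(j)}_t depend only on x_t and r, p^{(1)}, p^{(2)} are constants, the function t ↦ c_t equals F⟦x_{:t}⟧ for the four-state WFSA F with μ_j(x_t) = u^{(j)}_t, φ_j(x_t) = f^{(j)}_t, γ = r, ρ_1 = p^{(1)}, ρ_2 = p^{(2)}. -/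

import Mathlib

/-!
Sum the forward vectors of `F` over the paths without and with the ε-move. After `t` letters
this vector is `(1, c¹_t, c²_t, r)` on `(q0, q1, q2, q3)`: only the weight-`1` loop enters `q0`,
so its weight stays `1`, and the ε-move, open at every step, always leaves weight `r` on `q3`;
then `q1` obeys the unigram recursion and `q2`, fed by `q1` and `q3`, the bigram one. The score
is the dot product of this vector with the final weights.
-/

/-- Non-ε transition weights of the four-state WFSA `F` of Section 5.1
(states `0 = q0`, `1 = q1`, `2 = q2`, `3 = q3`): self-loop on `q0` with
weight `1`, `q0 → q1` weight `μ1 a`, `q1 → q1` weight `φ1 a`, `q1 → q2` and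
`q3 → q2` weight `μ2 a`, `q2 → q2` weight `φ2 a`. -/
def fTau {A : Type*} (μ1 φ1 μ2 φ2 : A → ℝ) : Fin 4 → Fin 4 → A → ℝ := fun q q' a =>
  if q = 0 ∧ q' = 0 then 1
  else if q = 0 ∧ q' = 1 then μ1 a
  else if q = 1 ∧ q' = 1 then φ1 a
  else if q = 1 ∧ q' = 2 then μ2 a
  else if q = 3 ∧ q' = 2 then μ2 a
  else if q = 2 ∧ q' = 2 then φ2 a
  else 0

/-- The single ε-transition of `F`: `q0 → q3` with weight `γ`. -/
def fEps (γ : ℝ) : Fin 4 → Fin 4 → ℝ := fun q q' =>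
  if q = 0 ∧ q' = 3 then γ else 0

/-- Final weights of `F`: `ρ1` on `q1` and `ρ2` on `q2`. -/
def fRho (ρ1 ρ2 : ℝ) : Fin 4 → ℝ := fun q =>
  if q = 1 then ρ1 else if q = 2 then ρ2 else 0

/-- Score assigned by `F` to the prefix `x_1 … x_t`: sum over all accepting
paths (taking the ε-transition either not at all, or exactly once at some
position `k` among the steps) of the product of the initial weight (`1` on
`q0`), all transition weights, and the final weight. -/
noncomputable def fScore {A : Type*} (μ1 φ1 μ2 φ2 : A → ℝ) (γ ρ1 ρ2 : ℝ)
    (x : ℕ → A) (t : ℕ) : ℝ :=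
  (∑ p : Fin (t + 1) → Fin 4,
      (if p 0 = 0 then (1 : ℝ) else 0) *
        (∏ i : Fin t, fTau μ1 φ1 μ2 φ2 (p i.castSucc) (p i.succ) (x (i.1 + 1))) *
        fRho ρ1 ρ2 (p (Fin.last t)))
  + ∑ k : Fin (t + 1), ∑ p : Fin (t + 2) → Fin 4,
      (if p 0 = 0 then (1 : ℝ) else 0) *
        (∏ i : Fin (t + 1),
          if i.1 = k.1 then fEps γ (p i.castSucc) (p i.succ)
          else if i.1 < k.1 then fTau μ1 φ1 μ2 φ2 (p i.castSucc) (p i.succ) (x (i.1 + 1))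
          else fTau μ1 φ1 μ2 φ2 (p i.castSucc) (p i.succ) (x i.1)) *
        fRho ρ1 ρ2 (p (Fin.last (t + 1)))


open Matrix

namespace WFSA

variable {σ R : Type*} [Fintype σ] [CommSemiring R]

def pathSum (M : ℕ → Matrix σ σ R) (α β : σ → R) (t : ℕ) : R :=
  ∑ p : Fin (t + 1) → σ,
    α (p 0) * (∏ i : Fin t, M i (p i.castSucc) (p i.succ)) * β (p (Fin.last t))

def forward (M : ℕ → Matrix σ σ R) (α : σ → R) : ℕ → σ → R
  | 0 => α
  | t + 1 => forward M α t ᵥ* M t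

variable (M : ℕ → Matrix σ σ R) (α : σ → R)

theorem pathSum_zero (β : σ → R) : pathSum M α β 0 = α ⬝ᵥ β := by
  rw [pathSum, ← (Equiv.funUnique (Fin 1) σ).symm.sum_comp]
  simp [dotProduct]

theorem pathSum_succ (β : σ → R) (t : ℕ) :
    pathSum M α β (t + 1) = pathSum M α (M t *ᵥ β) t := by
  rw [pathSum, ← (Fin.snocEquiv fun _ => σ).sum_comp, Fintype.sum_prod_type, Finset.sum_comm]
  refine Finset.sum_congr rfl fun p _ => ?_
  simp only [Fin.snocEquiv, Equiv.coe_fn_mk, Fin.prod_univ_castSucc, Fin.snoc_castSucc,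
    Fin.succ_castSucc, Fin.succ_last, Fin.snoc_last, Fin.val_castSucc, Fin.val_last,
    Fin.snoc_apply_zero, mulVec, dotProduct, Finset.mul_sum]
  exact Finset.sum_congr rfl fun q _ => by ring

theorem pathSum_eq_forward_dotProduct (β : σ → R) (t : ℕ) :
    pathSum M α β t = forward M α t ⬝ᵥ β := by
  induction t generalizing β with
  | zero => exact pathSum_zero M α β
  | succ t ih => rw [pathSum_succ, ih, dotProduct_mulVec, forward]

theorem forward_congr {M' : ℕ → Matrix σ σ R} {t : ℕ} (h : ∀ i < t, M i = M' i) :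
    forward M α t = forward M' α t := by
  induction t with
  | zero => rfl
  | succ t ih => rw [forward, forward, h t t.lt_succ_self, ih fun i hi => h i (by omega)]

/-- Step `k` is the ε-move; letters are indexed from `1`, so an earlier step `i` reads
letter `i + 1` of `N` and a later one letter `i`. -/
def withEpsAt (N : ℕ → Matrix σ σ R) (E : Matrix σ σ R) (k : ℕ) : ℕ → Matrix σ σ R :=
  fun i => if i = k then E else if i < k then N (i + 1) else N i

def epsForward (N : ℕ → Matrix σ σ R) (E : Matrix σ σ R) (α : σ → R) (t : ℕ) : σ → R :=
  ∑ k : Fin (t + 1), forward (withEpsAt N E k) α (t + 1)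

variable (N : ℕ → Matrix σ σ R) (E : Matrix σ σ R)

theorem epsForward_zero : epsForward N E α 0 = α ᵥ* E := by
  simp [epsForward, forward, withEpsAt]

theorem epsForward_succ (t : ℕ) :
    epsForward N E α (t + 1) =
      epsForward N E α t ᵥ* N (t + 1) + forward (fun i => N (i + 1)) α (t + 1) ᵥ* E := by
  rw [epsForward, Fin.sum_univ_castSucc, epsForward, sum_vecMul]
  congr 1
  · refine Finset.sum_congr rfl fun k _ => ?_
    have hk : withEpsAt N E k (t + 1) = N (t + 1) := by
      simp [withEpsAt, k.is_lt.ne', k.is_lt.not_gt]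
    rw [forward, Fin.val_castSucc, hk]
  · have hE : withEpsAt N E (t + 1) (t + 1) = E := if_pos rfl
    rw [forward, Fin.val_last, hE, forward_congr]
    intro i hi
    simp [withEpsAt, hi.ne, hi]

end WFSA

open WFSA

section Automaton

variable {A : Type*} (μ1 φ1 μ2 φ2 : A → ℝ) (γ : ℝ) (x : ℕ → A)

def fLetter (a : A) : Matrix (Fin 4) (Fin 4) ℝ := of fun q q' => fTau μ1 φ1 μ2 φ2 q q' a

def fInit : Fin 4 → ℝ := fun q => if q = 0 then 1 else 0

noncomputable def fForward (t : ℕ) : Fin 4 → ℝ :=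
  forward (fun i => fLetter μ1 φ1 μ2 φ2 (x (i + 1))) fInit t +
    epsForward (fun i => fLetter μ1 φ1 μ2 φ2 (x i)) (of (fEps γ)) fInit t

theorem fScore_eq_fForward_dotProduct (ρ1 ρ2 : ℝ) (t : ℕ) :
    fScore μ1 φ1 μ2 φ2 γ ρ1 ρ2 x t = fForward μ1 φ1 μ2 φ2 γ x t ⬝ᵥ fRho ρ1 ρ2 := by
  have hpaths : fScore μ1 φ1 μ2 φ2 γ ρ1 ρ2 x t =
      pathSum (fun i => fLetter μ1 φ1 μ2 φ2 (x (i + 1))) fInit (fRho ρ1 ρ2) t +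
        ∑ k : Fin (t + 1),
          pathSum (withEpsAt (fun i => fLetter μ1 φ1 μ2 φ2 (x i)) (of (fEps γ)) k)
            fInit (fRho ρ1 ρ2) (t + 1) := by
    refine congrArg₂ (· + ·) rfl
      (Finset.sum_congr rfl fun k _ => Finset.sum_congr rfl fun p _ => ?_)
    refine congrArg₂ (· * ·) (congrArg₂ (· * ·) rfl (Finset.prod_congr rfl fun i _ => ?_)) rfl
    simp only [withEpsAt]
    split_ifs <;> rfl
  simp only [hpaths, fForward, add_dotProduct, epsForward, sum_dotProduct,
    pathSum_eq_forward_dotProduct]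

theorem vecMul_fLetter_apply_zero (v : Fin 4 → ℝ) (a : A) :
    (v ᵥ* fLetter μ1 φ1 μ2 φ2 a) 0 = v 0 := by
  simp [vecMul, dotProduct, fLetter, fTau]

theorem forward_fLetter_apply_zero (t : ℕ) :
    forward (fun i => fLetter μ1 φ1 μ2 φ2 (x (i + 1))) fInit t 0 = 1 := by
  induction t with
  | zero => rfl
  | succ t ih => rw [forward, vecMul_fLetter_apply_zero, ih]

theorem vecMul_fEps_of_apply_zero {v : Fin 4 → ℝ} (hv : v 0 = 1) :
    v ᵥ* of (fEps γ) = ![0, 0, 0, γ] := by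
  ext q; fin_cases q <;> simp [vecMul, dotProduct, fEps, hv]

theorem fForward_zero : fForward μ1 φ1 μ2 φ2 γ x 0 = ![1, 0, 0, γ] := by
  rw [fForward, epsForward_zero, vecMul_fEps_of_apply_zero γ rfl]
  ext q; fin_cases q <;> simp [forward, fInit]

theorem fForward_succ (t : ℕ) :
    fForward μ1 φ1 μ2 φ2 γ x (t + 1) =
      fForward μ1 φ1 μ2 φ2 γ x t ᵥ* fLetter μ1 φ1 μ2 φ2 (x (t + 1)) + ![0, 0, 0, γ] := by
  rw [fForward, epsForward_succ, vecMul_fEps_of_apply_zero γ (forward_fLetter_apply_zero ..),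
    fForward, add_vecMul, forward, add_assoc]

theorem vecMul_fLetter (c1 c2 : ℝ) (a : A) :
    ![1, c1, c2, γ] ᵥ* fLetter μ1 φ1 μ2 φ2 a =
      ![1, φ1 a * c1 + μ1 a, φ2 a * c2 + (c1 + γ) * μ2 a, 0] := by
  ext q; fin_cases q <;> simp [vecMul, dotProduct, Fin.sum_univ_four, fLetter, fTau] <;> ring

end Automaton

theorem stmt19_general {A : Type*} (U1 U2 F1 F2 : A → ℝ) (r p1 p2 : ℝ)
    (x : ℕ → A) (c1 c2 c : ℕ → ℝ)
    (h10 : c1 0 = 0) (h20 : c2 0 = 0)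
    (h1 : ∀ t, 1 ≤ t → c1 t = F1 (x t) * c1 (t - 1) + U1 (x t))
    (h2 : ∀ t, 1 ≤ t → c2 t = F2 (x t) * c2 (t - 1) + (c1 (t - 1) + r) * U2 (x t))
    (hc : ∀ t, c t = p1 * c1 t + p2 * c2 t) :
    ∀ t, c t = fScore U1 F1 U2 F2 r p1 p2 x t := by
  have hforward : ∀ t, fForward U1 F1 U2 F2 r x t = ![1, c1 t, c2 t, r] := by
    intro t
    induction t with
    | zero => rw [fForward_zero, h10, h20]
    | succ t ih =>
      rw [fForward_succ, ih, vecMul_fLetter, h1 (t + 1) le_add_self, h2 (t + 1) le_add_self,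
        Nat.add_sub_cancel]
      ext q; fin_cases q <;> simp
  intro t
  rw [hc, fScore_eq_fForward_dotProduct, hforward]
  simp only [dotProduct, fRho, Fin.sum_univ_four, Fin.isValue, mul_ite, mul_zero, zero_ne_one,
    ↓reduceIte, Fin.reduceEq, cons_val_one, cons_val_zero, zero_add, cons_val, add_zero]
  ring

/-- Composing the unigram and bigram components: with
`c¹_t = f¹_t·c¹_{t-1} + u¹_t`, `c²_t = f²_t·c²_{t-1} + (c¹_{t-1} + r)·u²_t`
(both starting at `0`), and `c_t = p¹·c¹_t + p²·c²_t`, where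
`fʲ_t = Fⱼ(x_t)` and `uʲ_t = Uⱼ(x_t)` depend only on `x_t` and `r, p¹, p²`
are constants, the function `t ↦ c_t` equals `F⟦x_{:t}⟧` for the four-state
WFSA `F` with `μ_j = Uⱼ`, `φ_j = Fⱼ`, `γ = r`, `ρ1 = p¹`, `ρ2 = p²`. -/
theorem stmt19 {A : Type*} [Fintype A] (U1 U2 F1 F2 : A → ℝ) (r p1 p2 : ℝ)
    (x : ℕ → A) (c1 c2 c : ℕ → ℝ)
    (h10 : c1 0 = 0) (h20 : c2 0 = 0)
    (h1 : ∀ t, 1 ≤ t → c1 t = F1 (x t) * c1 (t - 1) + U1 (x t))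
    (h2 : ∀ t, 1 ≤ t → c2 t = F2 (x t) * c2 (t - 1) + (c1 (t - 1) + r) * U2 (x t))
    (hc : ∀ t, c t = p1 * c1 t + p2 * c2 t) :
    ∀ t, c t = fScore U1 F1 U2 F2 r p1 p2 x t :=
  stmt19_general U1 U2 F1 F2 r p1 p2 x c1 c2 c h10 h20 h1 h2 hc
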